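/- arXiv:2008.05103 — 4 statements merged into one kernel-verified Lean document; each statement's English description precedes it below -/
import Mathlib

section
/- If all n tuples of T are i.i.d. d-dimensional discrete random vectors with probability mass function g and distribution function G (G(v) = P(X ≤ v coordinatewise)), and S is a without-replacement sample of size m, then the expected error of the sampling algorithm is at most ((n−m)/n) Σ_{v ∈ V} g(v)(1 − G(v))^m, where V is the support. -/
open MeasureTheory ProbabilityTheory

/-- `u` dominates `v`: coordinatewise `≤` with strict inequality in some coordinate. -/
def dominates {d : ℕ} (u v : Fin d → ℝ) : Prop :=
  (∀ i, u i ≤ v i) ∧ ∃ j, u j < v j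

/-- The number of tuples (indexed by `Fin n`) dominated-or-equal by the subsample
with index set `s`. -/
noncomputable def dnCount {d n : ℕ} (X : Fin n → (Fin d → ℝ)) (s : Finset (Fin n)) : ℕ :=
  Nat.card {i : Fin n // ∃ j ∈ s, dominates (X j) (X i) ∨ X j = X i}

/-!
A tuple outside the sample `S` is uncovered exactly when no sampled tuple is coordinatewise `≤`
it. Splitting on its value `v ∈ V`, independence gives each piece probability
`g v * (1 - G v) ^ m`, and these pieces cover the event up to a null set. So each of the `n - m`
tuples outside `S` is uncovered with probability at most `∑ g v (1 - G v) ^ m`, for every `S`,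
hence also on average over `S`.
-/

open scoped ENNReal
open Finset

lemma dominates_iff_lt {d : ℕ} {u v : Fin d → ℝ} : dominates u v ↔ u < v :=
  Pi.lt_def.symm

open scoped Classical in
lemma dnCount_add_card_uncovered {d n : ℕ} (x : Fin n → Fin d → ℝ) (s : Finset (Fin n)) :
    dnCount x s + #{i ∈ sᶜ | ∀ j ∈ s, ¬ x j ≤ x i} = n := by
  have hcovered : dnCount x s = #{i | ∃ j ∈ s, x j ≤ x i} := by
    simp_rw [dnCount, Nat.card_eq_fintype_card, Fintype.card_subtype, dominates_iff_lt,
      ← le_iff_lt_or_eq]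
  have huncovered : {i ∈ sᶜ | ∀ j ∈ s, ¬ x j ≤ x i} =
      ({i | ¬ ∃ j ∈ s, x j ≤ x i} : Finset (Fin n)) := by
    ext i
    simp only [mem_filter, mem_compl, mem_univ, true_and, not_exists, not_and]
    exact ⟨And.right, fun h => ⟨fun hi => h i hi le_rfl, h⟩⟩
  rw [hcovered, huncovered, card_filter_add_card_filter_not, card_univ, Fintype.card_fin]

section Independence

variable {Ω ι α : Type*} [MeasurableSpace Ω] [MeasurableSpace α] {μ : Measure Ω}
  {X : ι → Ω → α} {ν : Measure α}

lemma measure_preimage_inter_biInter_preimage_eq (hX : ∀ i, Measurable (X i))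
    (hindep : iIndepFun X μ) (hlaw : ∀ i, μ.map (X i) = ν) {i : ι} {s : Finset ι} (hi : i ∉ s)
    {E B : Set α} (hE : MeasurableSet E) (hB : MeasurableSet B) :
    μ (X i ⁻¹' E ∩ ⋂ j ∈ s, X j ⁻¹' B) = ν E * ν B ^ #s := by
  classical
  have hpreimage : ∀ j {A : Set α}, MeasurableSet A → μ (X j ⁻¹' A) = ν A := fun j A hA => by
    rw [← hlaw j, Measure.map_apply (hX j) hA]
  have hne : ∀ j ∈ s, j ≠ i := fun j hj => ne_of_mem_of_not_mem hj hi
  let sets := Function.update (fun _ => B) i E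
  have hsets : ∀ k ∈ insert i s, MeasurableSet (sets k) := fun k _ => by
    by_cases hk : k = i
    · subst hk; simpa [sets] using hE
    · simpa [sets, hk] using hB
  have hinter := hindep.measure_inter_preimage_eq_mul (insert i s) hsets
  rw [set_biInter_insert, prod_insert hi] at hinter
  simp only [sets, Function.update_self] at hinter
  rw [Set.iInter₂_congr fun j hj => by rw [Function.update_of_ne (hne j hj)],
    prod_congr rfl fun j hj => by rw [Function.update_of_ne (hne j hj)]] at hinter
  rw [hinter, hpreimage i hE, prod_congr rfl fun j _ => hpreimage j hB, prod_const]

end Independence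

section Order

variable {Ω ι α : Type*} [MeasurableSpace Ω] {μ : Measure Ω} [Preorder α] [TopologicalSpace α]
  [ClosedIicTopology α] [MeasurableSpace α] [OpensMeasurableSpace α] [MeasurableSingletonClass α]
  {X : ι → Ω → α} {p : PMF α}

lemma measure_forall_not_le_le_tsum (hX : ∀ i, Measurable (X i)) (hindep : iIndepFun X μ)
    (hlaw : ∀ i, μ.map (X i) = p.toMeasure) {i : ι} {s : Finset ι} (hi : i ∉ s) :
    μ {ω | ∀ j ∈ s, ¬ X j ω ≤ X i ω} ≤
      ∑' v : p.support, p v * p.toMeasure (Set.Iic (v : α))ᶜ ^ #s := by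
  have hsupport : ∀ᵐ ω ∂μ, X i ω ∈ p.support := by
    have : ∀ᵐ v ∂p.toMeasure, v ∈ p.support := by
      rw [ae_iff, ← Set.compl_def, p.toMeasure_apply_eq_zero_iff p.support_countable.measurableSet.compl]
      exact disjoint_compl_right
    exact ae_of_ae_map (hX i).aemeasurable (hlaw i ▸ this)
  have hcover : {ω | ∀ j ∈ s, ¬ X j ω ≤ X i ω} ≤ᵐ[μ]
      ⋃ v : p.support, X i ⁻¹' {(v : α)} ∩ ⋂ j ∈ s, X j ⁻¹' (Set.Iic (v : α))ᶜ := by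
    filter_upwards [hsupport] with ω hω huncovered
    exact Set.mem_iUnion.2 ⟨⟨X i ω, hω⟩, rfl, Set.mem_iInter₂.2 huncovered⟩
  have : Countable p.support := p.support_countable.to_subtype
  calc _ ≤ _ := measure_mono_ae hcover
    _ ≤ _ := measure_iUnion_le _
    _ = _ := tsum_congr fun v => by
      rw [measure_preimage_inter_biInter_preimage_eq hX hindep hlaw hi
        (measurableSet_singleton _) measurableSet_Iic.compl,
        p.toMeasure_apply_singleton _ (measurableSet_singleton _)]

lemma measureReal_forall_not_le_le_tsum (hX : ∀ i, Measurable (X i)) (hindep : iIndepFun X μ)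
    (hlaw : ∀ i, μ.map (X i) = p.toMeasure) {i : ι} {s : Finset ι} (hi : i ∉ s) :
    μ.real {ω | ∀ j ∈ s, ¬ X j ω ≤ X i ω} ≤
      ∑' v : p.support, (p v).toReal * (1 - (p.toMeasure (Set.Iic (v : α))).toReal) ^ #s := by
  have hterm : ∀ v : p.support, p v * p.toMeasure (Set.Iic (v : α))ᶜ ^ #s ≤ p v := fun v =>
    mul_le_of_le_one_right' (pow_le_one₀ zero_le prob_le_one)
  have hfinite : ∑' v : p.support, p v * p.toMeasure (Set.Iic (v : α))ᶜ ^ #s ≠ ∞ :=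
    ne_top_of_le_ne_top (p.tsum_coe ▸ ENNReal.one_ne_top)
      ((ENNReal.tsum_le_tsum hterm).trans
        (ENNReal.tsum_comp_le_tsum_of_injective Subtype.val_injective p))
  calc _ ≤ _ := ENNReal.toReal_mono hfinite (measure_forall_not_le_le_tsum hX hindep hlaw hi)
    _ = _ := by
      rw [ENNReal.tsum_toReal_eq fun v : p.support => ne_top_of_le_ne_top (p.apply_ne_top _) (hterm v)]
      refine tsum_congr fun v => ?_
      rw [ENNReal.toReal_mul, ENNReal.toReal_pow, prob_compl_eq_one_sub measurableSet_Iic,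
        ENNReal.toReal_sub_of_le prob_le_one ENNReal.one_ne_top, ENNReal.toReal_one]

end Order

section Error

variable {Ω : Type*} [MeasurableSpace Ω] {μ : Measure Ω} [IsFiniteMeasure μ] {d n : ℕ}
  {X : Fin n → Ω → Fin d → ℝ}

lemma integral_sub_dnCount_div_eq (hX : ∀ i, Measurable (X i)) (s : Finset (Fin n)) :
    ∫ ω, ((n : ℝ) - dnCount (fun i => X i ω) s) / n ∂μ =
      (n : ℝ)⁻¹ * ∑ i ∈ sᶜ, μ.real {ω | ∀ j ∈ s, ¬ X j ω ≤ X i ω} := by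
  classical
  have hmeas : ∀ i, MeasurableSet {ω | ∀ j ∈ s, ¬ X j ω ≤ X i ω} := fun i => by
    simp only [Set.ofPred_forall]
    exact .iInter fun j => .iInter fun _ => (measurableSet_le (hX j) (hX i)).compl
  have hcount : ∀ ω, ((n : ℝ) - dnCount (fun i => X i ω) s) / n =
      (n : ℝ)⁻¹ * ∑ i ∈ sᶜ, {ω | ∀ j ∈ s, ¬ X j ω ≤ X i ω}.indicator (1 : Ω → ℝ) ω := fun ω => by
    have h := congrArg (Nat.cast (R := ℝ)) (dnCount_add_card_uncovered (fun i => X i ω) s)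
    push_cast at h
    rw [← eq_sub_of_add_eq' h, card_filter, Nat.cast_sum, div_eq_inv_mul]
    simp [Set.indicator_apply]
  simp_rw [hcount, integral_const_mul]
  rw [integral_finsetSum _ fun i _ => (integrable_const (1 : ℝ)).indicator (hmeas i) (f := 1)]
  simp_rw [integral_indicator_one (hmeas _)]

lemma integral_sub_dnCount_div_le (hX : ∀ i, Measurable (X i)) (hindep : iIndepFun X μ)
    {p : PMF (Fin d → ℝ)} (hlaw : ∀ i, μ.map (X i) = p.toMeasure) (s : Finset (Fin n)) :
    ∫ ω, ((n : ℝ) - dnCount (fun i => X i ω) s) / n ∂μ ≤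
      ((n : ℝ) - #s) / n *
        ∑' v : p.support, (p v).toReal * (1 - (p.toMeasure (Set.Iic (v : Fin d → ℝ))).toReal) ^ #s := by
  rw [integral_sub_dnCount_div_eq hX s, div_eq_inv_mul, mul_assoc]
  gcongr
  calc _ ≤ ∑ _i ∈ sᶜ, ∑' v : p.support,
        (p v).toReal * (1 - (p.toMeasure (Set.Iic (v : Fin d → ℝ))).toReal) ^ #s :=
        sum_le_sum fun i hi => measureReal_forall_not_le_le_tsum hX hindep hlaw (mem_compl.1 hi)
    _ = _ := by
      rw [sum_const, nsmul_eq_mul, card_compl, Nat.cast_sub (card_le_univ s), Fintype.card_fin]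

end Error

/-- If the `n` tuples of `T` are i.i.d. discrete random vectors with mass function `g`
(support `V`) and distribution function `G`, and `S` is a uniform without-replacement
sample of size `m`, then the expected error is at most
`((n-m)/n) Σ_{v ∈ V} g(v) (1-G(v))^m`. -/
theorem expected_error_discrete_le
    {Ω : Type*} [MeasureSpace Ω] [IsProbabilityMeasure (ℙ : Measure Ω)]
    {d n m : ℕ} (hmn : m ≤ n) (X : Fin n → Ω → (Fin d → ℝ))
    (p : PMF (Fin d → ℝ)) (g : (Fin d → ℝ) → ℝ) (G : (Fin d → ℝ) → ℝ)
    (hmeas : ∀ i, Measurable (X i))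
    (hindep : iIndepFun X ℙ)
    (hlaw : ∀ i, Measure.map (X i) ℙ = p.toMeasure)
    (hg : ∀ v, g v = (p v).toReal)
    (hG : ∀ v, G v = (p.toMeasure (Set.Iic v)).toReal) :
    ((Finset.powersetCard m (Finset.univ : Finset (Fin n))).card : ℝ)⁻¹ *
      ∑ s ∈ Finset.powersetCard m (Finset.univ : Finset (Fin n)),
        ∫ ω, ((n : ℝ) - (dnCount (fun i => X i ω) s : ℝ)) / n ∂ℙ ≤
      (((n : ℝ) - m) / n) * ∑' v : p.support, g v * (1 - G v) ^ m := by
  have hcard_pos : (0 : ℝ) < #(powersetCard m (univ : Finset (Fin n))) := by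
    rw [card_powersetCard, card_univ, Fintype.card_fin]
    exact_mod_cast Nat.choose_pos hmn
  rw [inv_mul_le_iff₀ hcard_pos, ← nsmul_eq_mul]
  refine sum_le_card_nsmul _ _ _ fun s hs => ?_
  obtain rfl : #s = m := mem_powersetCard_univ.1 hs
  simpa only [hg, hG] using integral_sub_dnCount_div_le hmeas hindep hlaw s
end

section
/- The generalized harmonic number H_{d,n} defined by H_{0,n} = 1 for all n ≥ 1 and H_{d,n} = Σ_{i=1}^{n} H_{d−1,i}/i satisfies H_{d,n} ≤ Σ_{i=0}^{d} (log n)^i / i! for all d ≥ 0 and n ≥ 1. -/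
/-!
With `P_d(t) = ∑_{i ≤ d} tⁱ / i!` we have `P_{d+1}' = P_d` and `P_d(0) = 1`. Inductively
`H_{d+1,n} ≤ ∑_{i=1}^n P_d(log i) / i`, and `x ↦ P_d(log x) / x` is decreasing on `[1, ∞)`
(its derivative is `-(log x)^d / (d! x²)`), so the sum is at most its first term `1` plus
`∫_1^n P_d(log x) / x dx = P_{d+1}(log n) - 1`.
-/

/-- The `d`-th order harmonic numbers: `H 0 n = 1`, `H (d+1) n = Σ_{i=1}^n H d i / i`. -/
noncomputable def H : ℕ → ℕ → ℝ
  | 0, _ => 1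
  | d + 1, n => ∑ i ∈ Finset.Icc 1 n, H d i / i

open Real Finset

noncomputable def expTaylor (d : ℕ) (t : ℝ) : ℝ :=
  ∑ i ∈ range (d + 1), t ^ i / i.factorial

lemma expTaylor_zero_left : expTaylor 0 = fun _ => 1 := by
  ext t
  simp [expTaylor]

lemma expTaylor_zero_right (d : ℕ) : expTaylor d 0 = 1 := by
  simp [expTaylor, sum_range_succ']

lemma expTaylor_succ (d : ℕ) (t : ℝ) :
    expTaylor (d + 1) t = expTaylor d t + t ^ (d + 1) / (d + 1).factorial :=
  sum_range_succ _ _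

lemma hasDerivAt_expTaylor_succ (d : ℕ) (t : ℝ) :
    HasDerivAt (expTaylor (d + 1)) (expTaylor d t) t := by
  have hterm (i : ℕ) : HasDerivAt (fun s : ℝ => s ^ (i + 1) / (i + 1).factorial)
      (t ^ i / i.factorial) t := by
    refine ((hasDerivAt_pow (i + 1) t).div_const _).congr_deriv ?_
    rw [Nat.factorial_succ]
    push_cast
    field_simp
  have hsplit : expTaylor (d + 1) =
      fun s => 1 + ∑ i ∈ range (d + 1), s ^ (i + 1) / ((i + 1).factorial : ℝ) := by
    ext s
    rw [expTaylor, sum_range_succ', add_comm]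
    simp
  rw [hsplit]
  exact (HasDerivAt.fun_sum fun i (_ : i ∈ range (d + 1)) => hterm i).const_add 1

lemma hasDerivAt_expTaylor (d : ℕ) (t : ℝ) :
    HasDerivAt (expTaylor d) (expTaylor d t - t ^ d / d.factorial) t := by
  cases d with
  | zero => simpa [expTaylor_zero_left] using hasDerivAt_const t (1 : ℝ)
  | succ d => simpa [expTaylor_succ] using hasDerivAt_expTaylor_succ d t

lemma hasDerivAt_expTaylor_log_div (d : ℕ) {x : ℝ} (hx : 0 < x) :
    HasDerivAt (fun y => expTaylor d (log y) / y) (-(log x ^ d / d.factorial) / x ^ 2) x := by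
  refine (((hasDerivAt_expTaylor d (log x)).comp x (hasDerivAt_log hx.ne')).div
    (hasDerivAt_id x) hx.ne').congr_deriv ?_
  simp only [Function.comp_apply, id]
  field_simp
  ring

lemma antitoneOn_expTaylor_log_div (d : ℕ) :
    AntitoneOn (fun x => expTaylor d (log x) / x) (Set.Ici 1) := by
  refine antitoneOn_of_hasDerivWithinAt_nonpos (convex_Ici 1) ?_ ?_ ?_
    (f' := fun x => -(log x ^ d / d.factorial) / x ^ 2)
  · exact fun x hx => (hasDerivAt_expTaylor_log_div d
      (zero_lt_one.trans_le hx)).continuousAt.continuousWithinAt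
  · rw [interior_Ici]
    exact fun x hx => (hasDerivAt_expTaylor_log_div d (zero_lt_one.trans hx)).hasDerivWithinAt
  · rw [interior_Ici]
    intro x hx
    have : 0 ≤ log x := log_nonneg hx.le
    exact div_nonpos_of_nonpos_of_nonneg (neg_nonpos.2 (by positivity)) (by positivity)

lemma integral_expTaylor_log_div (d : ℕ) {b : ℝ} (hb : 1 ≤ b) :
    ∫ x in 1..b, expTaylor d (log x) / x = expTaylor (d + 1) (log b) - 1 := by
  have hpos {x : ℝ} (hx : x ∈ Set.uIcc 1 b) : 0 < x := by
    rw [Set.uIcc_of_le hb] at hx; exact zero_lt_one.trans_le hx.1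
  rw [intervalIntegral.integral_eq_sub_of_hasDerivAt (f := expTaylor (d + 1) ∘ log)]
  · simp [expTaylor_zero_right]
  · exact fun x hx =>
      (hasDerivAt_expTaylor_succ d (log x)).comp x (hasDerivAt_log (hpos hx).ne')
  · exact ContinuousOn.intervalIntegrable fun x hx =>
      (hasDerivAt_expTaylor_log_div d (hpos hx)).continuousAt.continuousWithinAt

lemma AntitoneOn.sum_Icc_le_add_integral {f : ℝ → ℝ} {n : ℕ} (hn : 1 ≤ n)
    (hf : AntitoneOn f (Set.Icc 1 n)) :
    ∑ i ∈ Icc 1 n, f i ≤ f 1 + ∫ x in 1..n, f x := by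
  have := AntitoneOn.sum_le_integral_Ico hn (by simpa using hf)
  rw [← add_sum_Ioc_eq_sum_Icc hn, ← Finset.Ico_add_one_add_one_eq_Ioc, ← sum_Ico_add']
  simpa using this

lemma H_succ_le_expTaylor_log {d n : ℕ} (hn : 1 ≤ n) (ih : ∀ i ∈ Icc 1 n, H d i ≤ expTaylor d (log i)) :
    H (d + 1) n ≤ expTaylor (d + 1) (log n) := calc
  H (d + 1) n ≤ ∑ i ∈ Icc 1 n, expTaylor d (log i) / i :=
    sum_le_sum fun i hi => div_le_div_of_nonneg_right (ih i hi) (Nat.cast_nonneg i)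
  _ ≤ expTaylor d (log 1) / 1 + ∫ x in 1..n, expTaylor d (log x) / x :=
    ((antitoneOn_expTaylor_log_div d).mono fun x hx => hx.1).sum_Icc_le_add_integral hn
  _ = expTaylor (d + 1) (log n) := by
    rw [integral_expTaylor_log_div d (by exact_mod_cast hn)]
    simp [expTaylor_zero_right]

/-- `H_{d,n} ≤ Σ_{i=0}^{d} (log n)^i / i!` for all `d ≥ 0`, `n ≥ 1`. -/
theorem harmonic_le_log_sum (d n : ℕ) (hn : 1 ≤ n) :
    H d n ≤ ∑ i ∈ Finset.range (d + 1), (Real.log n) ^ i / (Nat.factorial i) := by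
  induction d generalizing n with
  | zero => simp [H]
  | succ d ih => exact H_succ_le_expTaylor_log hn fun i hi => ih i (mem_Icc.1 hi).1
end

section
/- Under component independence (independent coordinates, all coordinate values distinct), if T has n tuples and the sample size is m, the expected error of the sampling-based skyline algorithm equals ((n−m)/(n(m+1))) H_{d−1,m+1}, which is at most ((n−m)/(n(m+1))) Σ_{i=0}^{d−1} (log(m+1))^i / i!. -/
/-!
Fix a sample `s` of size `m` and a tuple `i ∉ s`. Conditioning on `X i = x`, the `m` sample
points independently fail to satisfy `X j ≤ x` with probability `1 - ∏ c, x c` each, so `i` is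
missed by the sample with probability `∫_{[0,1]^d} (1 - ∏ c, x c) ^ m dx`; tuples of the sample
are never missed, so the expected error is `(n - m) / n` times this. Expanding the power and
integrating the monomials gives `∑ k, (-1)^k C(m,k) / (k+1)^d`, and Pascal's rule shows that
`(m+1)` times this alternating sum obeys the recursion defining `H (d-1) (m+1)`.

For the bound, `logPowSum e x = ∑_{j ≤ e} (log x)^j / j!`, so `logPowSum (e+1)` has derivative
`logPowSum e x / x`, which is decreasing on `[1, ∞)`; comparing `∑_{i ≤ N} logPowSum e i / i`
with its integral gives `H e N ≤ logPowSum e N` by induction on `e`.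
-/

open MeasureTheory ProbabilityTheory

section AlternatingSum
open Finset

lemma H_succ_zero (e : ℕ) : H (e + 1) 0 = 0 := rfl

lemma H_succ_succ (e N : ℕ) : H (e + 1) (N + 1) = H (e + 1) N + H e (N + 1) / (N + 1) := by
  simp only [H]
  rw [sum_Icc_succ_top (by omega)]
  push_cast
  rfl

noncomputable def altChooseSum (e N : ℕ) : ℝ :=
  ∑ k ∈ range N, (-1) ^ k * N.choose (k + 1) / ((k : ℝ) + 1) ^ e

lemma altChooseSum_zero_left (N : ℕ) : altChooseSum 0 (N + 1) = 1 := by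
  have h := Int.alternating_sum_range_choose (n := N + 1)
  rw [sum_range_succ', if_neg N.succ_ne_zero] at h
  simp only [pow_succ, mul_neg_one, neg_mul, sum_neg_distrib, pow_zero, one_mul,
    Nat.choose_zero_right, Nat.cast_one] at h
  have hsum : ∑ k ∈ range (N + 1), ((-1) ^ k * (N + 1).choose (k + 1) : ℤ) = 1 := by linarith
  simp only [altChooseSum, pow_zero, div_one]
  exact_mod_cast hsum

lemma sum_range_choose_div_pow_succ (e m : ℕ) :
    ∑ k ∈ range (m + 1), (-1) ^ k * m.choose k / ((k : ℝ) + 1) ^ (e + 1) =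
      altChooseSum e (m + 1) / (m + 1) := by
  rw [altChooseSum, sum_div]
  refine sum_congr rfl fun k _ => ?_
  have h : (m.choose k : ℝ) = (m + 1).choose (k + 1) * ((k : ℝ) + 1) / (m + 1) := by
    rw [eq_div_iff (by positivity)]
    exact_mod_cast (mul_comm _ _).trans (Nat.add_one_mul_choose_eq m k)
  rw [h]
  field_simp
  ring

lemma altChooseSum_succ_succ (e N : ℕ) :
    altChooseSum (e + 1) (N + 1) = altChooseSum (e + 1) N + altChooseSum e (N + 1) / (N + 1) := by
  have hN : altChooseSum (e + 1) N =
      ∑ k ∈ range (N + 1), (-1) ^ k * N.choose (k + 1) / ((k : ℝ) + 1) ^ (e + 1) := by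
    simp [altChooseSum, sum_range_succ]
  rw [hN, ← sum_range_choose_div_pow_succ, altChooseSum, ← sum_add_distrib]
  refine sum_congr rfl fun k _ => ?_
  rw [Nat.choose_succ_succ']
  push_cast
  ring

lemma altChooseSum_eq_H (e N : ℕ) : altChooseSum e (N + 1) = H e (N + 1) := by
  induction e generalizing N with
  | zero => exact altChooseSum_zero_left N
  | succ e ih =>
    suffices ∀ N, altChooseSum (e + 1) N = H (e + 1) N from this _
    intro N
    induction N with
    | zero => simp [altChooseSum, H_succ_zero]
    | succ N ihN => rw [altChooseSum_succ_succ, H_succ_succ, ihN, ih]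

lemma sum_range_choose_div_pow_succ_eq_H (e m : ℕ) :
    ∑ k ∈ range (m + 1), (-1) ^ k * m.choose k / ((k : ℝ) + 1) ^ (e + 1) =
      H e (m + 1) / (m + 1) := by
  rw [sum_range_choose_div_pow_succ, altChooseSum_eq_H]

end AlternatingSum

section LogPowSum
open Finset Real Set
open scoped Nat

noncomputable def logPowSum (e : ℕ) (x : ℝ) : ℝ :=
  ∑ j ∈ range (e + 1), log x ^ j / j !

lemma logPowSum_one (e : ℕ) : logPowSum e 1 = 1 := by
  simp [logPowSum, sum_range_succ']

lemma logPowSum_succ (e : ℕ) (x : ℝ) :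
    logPowSum (e + 1) x = logPowSum e x + log x ^ (e + 1) / (e + 1)! :=
  sum_range_succ _ _

lemma hasDerivAt_logPowSum (e : ℕ) {x : ℝ} (hx : x ≠ 0) :
    HasDerivAt (logPowSum e) ((logPowSum e x - log x ^ e / e !) / x) x := by
  have hsum : HasDerivAt (logPowSum e)
      (∑ j ∈ range (e + 1), j * log x ^ (j - 1) * x⁻¹ / j !) x :=
    HasDerivAt.fun_sum fun j _ => ((hasDerivAt_log hx).pow j).div_const _
  convert hsum using 1
  cases e with
  | zero => simp [logPowSum]
  | succ e =>
    rw [logPowSum_succ, add_sub_cancel_right, logPowSum, sum_div, sum_range_succ' _ (e + 1)]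
    simp only [CharP.cast_eq_zero, zero_mul, zero_div, add_zero]
    refine sum_congr rfl fun j _ => ?_
    rw [Nat.factorial_succ, Nat.add_sub_cancel]
    push_cast
    field_simp

lemma hasDerivAt_logPowSum_succ (e : ℕ) {x : ℝ} (hx : x ≠ 0) :
    HasDerivAt (logPowSum (e + 1)) (logPowSum e x / x) x := by
  simpa [logPowSum_succ] using hasDerivAt_logPowSum (e + 1) hx

lemma antitoneOn_logPowSum_div (e : ℕ) : AntitoneOn (fun x => logPowSum e x / x) (Ici 1) := by
  have hderiv {x : ℝ} (hx : 1 ≤ x) :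
      HasDerivAt (fun x => logPowSum e x / x) (-(log x ^ e / e !) / x ^ 2) x := by
    have hx0 : x ≠ 0 := (zero_lt_one.trans_le hx).ne'
    refine ((hasDerivAt_logPowSum e hx0).div (hasDerivAt_id x) hx0).congr_deriv ?_
    simp only [id]
    field_simp
    ring
  refine antitoneOn_of_deriv_nonpos (convex_Ici 1)
    (fun x hx => (hderiv hx).continuousAt.continuousWithinAt) (fun x hx => ?_) (fun x hx => ?_)
  all_goals rw [interior_Ici] at hx
  · exact (hderiv hx.le).differentiableAt.differentiableWithinAt
  · rw [(hderiv hx.le).deriv]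
    have hlog := log_nonneg hx.le
    exact div_nonpos_of_nonpos_of_nonneg (neg_nonpos.2 (by positivity)) (sq_nonneg x)

lemma sum_logPowSum_div_le (e N : ℕ) :
    ∑ i ∈ Icc 1 (N + 1), logPowSum e i / i ≤ logPowSum (e + 1) (N + 1) := by
  have hanti : AntitoneOn (fun x => logPowSum e x / x) (Icc 1 (1 + N)) :=
    (antitoneOn_logPowSum_div e).mono Icc_subset_Ici_self
  have hftc : ∫ x in (1 : ℝ)..1 + N, logPowSum e x / x = logPowSum (e + 1) (N + 1) - 1 := by
    rw [intervalIntegral.integral_eq_sub_of_hasDerivAt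
      (fun x hx => hasDerivAt_logPowSum_succ e ?_) (AntitoneOn.intervalIntegrable ?_),
      logPowSum_one, add_comm (1 : ℝ)]
    · rw [Set.uIcc_of_le (by simp)]; exact hanti
    · rw [Set.uIcc_of_le (by simp)] at hx; exact (zero_lt_one.trans_le hx.1).ne'
  have hsum := hanti.sum_le_integral
  rw [hftc] at hsum
  rw [← Finset.Ico_add_one_right_eq_Icc, Finset.sum_Ico_eq_sum_range, Nat.add_sub_cancel,
    sum_range_succ']
  push_cast at hsum ⊢
  rw [logPowSum_one, div_one]
  linarith

lemma H_le_logPowSum (e N : ℕ) : H e N ≤ logPowSum e N := by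
  induction e generalizing N with
  | zero => simp [H, logPowSum]
  | succ e ih =>
    cases N with
    | zero => simp [H_succ_zero, logPowSum, sum_range_succ'] -- uses `Real.log 0 = 0`
    | succ N =>
      calc H (e + 1) (N + 1) = ∑ i ∈ Icc 1 (N + 1), H e i / i := rfl
        _ ≤ ∑ i ∈ Icc 1 (N + 1), logPowSum e i / i := by gcongr with i; exact ih i
        _ ≤ logPowSum (e + 1) ↑(N + 1) := by exact_mod_cast sum_logPowSum_div_le e N

end LogPowSum

section UnitCube
open Set

variable {ι : Type*} [Fintype ι]

instance : IsProbabilityMeasure ((volume : Measure ℝ).restrict (Icc 0 1)) :=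
  ⟨by simp⟩

lemma volume_restrict_Icc_zero_one_eq_pi :
    (volume : Measure (ι → ℝ)).restrict (Icc 0 1) =
      Measure.pi fun _ => (volume : Measure ℝ).restrict (Icc 0 1) := by
  rw [volume_pi, ← pi_univ_Icc, Measure.restrict_pi_pi]
  rfl

instance : IsProbabilityMeasure ((volume : Measure (ι → ℝ)).restrict (Icc 0 1)) := by
  rw [volume_restrict_Icc_zero_one_eq_pi]
  infer_instance

lemma measureReal_compl_Iic_unitCube {x : ι → ℝ} (hx : x ∈ Icc 0 1) :
    ((volume : Measure (ι → ℝ)).restrict (Icc 0 1)).real (Iic x)ᶜ = 1 - ∏ i, x i := by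
  have hinter : Iic x ∩ Icc 0 1 = Icc 0 x := by
    ext z
    simp only [mem_inter_iff, mem_Iic, mem_Icc]
    exact ⟨fun h => ⟨h.2.1, h.1⟩, fun h => ⟨h.2, h.1, h.2.trans hx.2⟩⟩
  rw [probReal_compl_eq_one_sub measurableSet_Iic, measureReal_restrict_apply measurableSet_Iic,
    hinter, measureReal_def, Real.volume_Icc_pi_toReal hx.1]
  simp

lemma integral_prod_pow_unitCube (k : ℕ) :
    ∫ x in Icc (0 : ι → ℝ) 1, ∏ i, x i ^ k = (((k : ℝ) + 1) ^ Fintype.card ι)⁻¹ := by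
  rw [volume_restrict_Icc_zero_one_eq_pi, integral_fintype_prod_eq_pow (fun t : ℝ => t ^ k),
    integral_Icc_eq_integral_Ioc, ← intervalIntegral.integral_of_le zero_le_one, integral_pow]
  simp [inv_pow]

lemma integral_one_sub_prod_pow_unitCube (m : ℕ) :
    ∫ x in Icc (0 : ι → ℝ) 1, (1 - ∏ i, x i) ^ m =
      ∑ k ∈ Finset.range (m + 1),
        (-1) ^ k * m.choose k / ((k : ℝ) + 1) ^ Fintype.card ι := by
  have hexpand (x : ι → ℝ) : (1 - ∏ i, x i) ^ m =
      ∑ k ∈ Finset.range (m + 1), (-1) ^ k * m.choose k * ∏ i, x i ^ k := by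
    rw [sub_eq_neg_add, add_pow]
    refine Finset.sum_congr rfl fun k _ => ?_
    rw [neg_pow, Finset.prod_pow]
    ring
  simp_rw [hexpand]
  rw [integral_finsetSum _ fun k _ => ?_]
  · refine Finset.sum_congr rfl fun k _ => ?_
    rw [integral_const_mul, integral_prod_pow_unitCube, div_eq_mul_inv]
  · exact (continuous_const.mul (continuous_finsetProd _ fun i _ =>
      (continuous_apply i).pow k)).integrableOn_Icc

end UnitCube

section Independence
open Set

variable {Ω β ι : Type*} [MeasurableSpace Ω] [MeasurableSpace β] {μ : Measure Ω}
  {ν : Measure β} {X : ι → Ω → β}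

lemma measure_forall_mem_of_iIndepFun (hmeas : ∀ i, Measurable (X i)) (hindep : iIndepFun X μ)
    (hlaw : ∀ i, μ.map (X i) = ν) {r : β → β → Prop}
    (hr : MeasurableSet {p : β × β | r p.1 p.2})
    {s : Finset ι} {i : ι} (hi : i ∉ s) :
    μ {ω | ∀ j ∈ s, r (X i ω) (X j ω)} = ∫⁻ x, ν {y | r x y} ^ s.card ∂ν := by
  classical
  have := hindep.isProbabilityMeasure
  have : IsProbabilityMeasure ν :=
    hlaw i ▸ Measure.isProbabilityMeasure_map (hmeas i).aemeasurable
  set Y : Ω → s → β := fun ω j => X j ω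
  have hY : Measurable Y := measurable_pi_lambda _ fun j => hmeas j
  have hindepY : IndepFun (X i) Y μ :=
    (hindep.indepFun_finset {i} s (Finset.disjoint_singleton_left.2 hi) hmeas).comp
      (measurable_pi_apply (⟨i, Finset.mem_singleton_self i⟩ : ({i} : Finset ι))) measurable_id
  have hlawY : μ.map Y = Measure.pi fun _ => ν := by
    rw [iIndepFun.map_fun_eq_pi_map (f := fun j : s => X j) (fun j => (hmeas j).aemeasurable)
      (hindep.precomp Subtype.val_injective)]
    simp_rw [hlaw]
  have hjoint : μ.map (fun ω => (X i ω, Y ω)) = ν.prod (Measure.pi fun _ => ν) := by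
    rw [hindepY.map_prod_eq_prod_map_map (hmeas i).aemeasurable hY.aemeasurable, hlaw, hlawY]
  set R : Set (β × (s → β)) := ⋂ j, (fun p => (p.1, p.2 j)) ⁻¹' {p | r p.1 p.2}
  have hR : MeasurableSet R :=
    .iInter fun j => (measurable_fst.prodMk ((measurable_pi_apply j).comp measurable_snd)) hr
  calc μ {ω | ∀ j ∈ s, r (X i ω) (X j ω)}
      = μ.map (fun ω => (X i ω, Y ω)) R := by
        rw [Measure.map_apply ((hmeas i).prodMk hY) hR]
        congr 1
        ext ω
        simp [R, Y]
    _ = ∫⁻ x, (Measure.pi fun _ => ν) (Prod.mk x ⁻¹' R) ∂ν := by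
        rw [hjoint, Measure.prod_apply hR]
    _ = ∫⁻ x, ν {y | r x y} ^ s.card ∂ν := by
        refine lintegral_congr fun x => ?_
        have : Prod.mk x ⁻¹' R = univ.pi fun _ => {y | r x y} := by
          ext y
          simp [R]
        rw [this, Measure.pi_pi, Finset.prod_const, Finset.card_univ, Fintype.card_coe]

end Independence

lemma dominates_or_eq_iff_le {d : ℕ} {u v : Fin d → ℝ} :
    dominates u v ∨ u = v ↔ u ≤ v := by
  refine ⟨fun h => h.elim (fun h => h.1) (fun h => h.le), fun h => ?_⟩
  by_cases hlt : ∃ j, u j < v j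
  · exact Or.inl ⟨h, hlt⟩
  · push Not at hlt
    exact Or.inr (le_antisymm h hlt)

open Classical in
lemma natCast_sub_dnCount {d n : ℕ} (x : Fin n → (Fin d → ℝ)) (s : Finset (Fin n)) :
    (n : ℝ) - dnCount x s = (Finset.univ.filter fun i => ∀ j ∈ s, ¬ x j ≤ x i).card := by
  have hcount : dnCount x s = (Finset.univ.filter fun i => ∃ j ∈ s, x j ≤ x i).card := by
    simp only [dnCount, dominates_or_eq_iff_le, Nat.card_eq_fintype_card, Fintype.card_subtype]
  rw [hcount, sub_eq_iff_eq_add', ← Nat.cast_add]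
  simp_rw [← not_exists, exists_prop]
  rw [Finset.card_filter_add_card_filter_not, Finset.card_univ, Fintype.card_fin]

section SkylineError
open Set

variable {Ω : Type*} [MeasurableSpace Ω] {μ : Measure Ω}

lemma measureReal_forall_not_le_of_iIndepFun {ι κ : Type*} [Fintype κ]
    {X : ι → Ω → (κ → ℝ)} (hmeas : ∀ i, Measurable (X i))
    (hindep : iIndepFun X μ) (hlaw : ∀ i, μ.map (X i) = volume.restrict (Icc 0 1))
    {s : Finset ι} {i : ι} (hi : i ∉ s) :
    μ.real {ω | ∀ j ∈ s, ¬ X j ω ≤ X i ω} =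
      ∑ k ∈ Finset.range (s.card + 1),
        (-1) ^ k * s.card.choose k / ((k : ℝ) + 1) ^ Fintype.card κ := by
  set ν := (volume : Measure (κ → ℝ)).restrict (Icc 0 1)
  have hr : MeasurableSet {p : (κ → ℝ) × (κ → ℝ) | ¬ p.2 ≤ p.1} :=
    (measurableSet_le measurable_snd measurable_fst).compl
  have hcompl : ∀ᵐ x ∂ν, ν.real (Iic x)ᶜ = 1 - ∏ k, x k :=
    (ae_restrict_mem measurableSet_Icc).mono fun x hx => measureReal_compl_Iic_unitCube hx
  have hae : ∀ᵐ x ∂ν, ν {y | ¬ y ≤ x} ^ s.card =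
      ENNReal.ofReal ((1 - ∏ k, x k) ^ s.card) := by
    filter_upwards [hcompl] with x hx
    rw [← hx, ENNReal.ofReal_pow measureReal_nonneg, ofReal_measureReal]
    rfl
  rw [measureReal_def,
    measure_forall_mem_of_iIndepFun (r := fun x y => ¬ y ≤ x) hmeas hindep hlaw hr hi,
    lintegral_congr_ae hae, ← integral_eq_lintegral_of_nonneg_ae,
    integral_one_sub_prod_pow_unitCube]
  · filter_upwards [hcompl] with x hx
    rw [← hx]
    positivity
  · exact (continuous_const.sub (continuous_finsetProd _ fun k _ => continuous_apply k)).pow _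
      |>.aestronglyMeasurable

lemma integral_natCast_sub_dnCount {d n : ℕ} {X : Fin n → Ω → (Fin d → ℝ)}
    (hmeas : ∀ i, Measurable (X i)) (hindep : iIndepFun X μ)
    (hlaw : ∀ i, μ.map (X i) = volume.restrict (Icc 0 1)) (s : Finset (Fin n)) :
    ∫ ω, ((n : ℝ) - dnCount (fun i => X i ω) s) ∂μ =
      (n - s.card) * ∑ k ∈ Finset.range (s.card + 1),
        (-1) ^ k * s.card.choose k / ((k : ℝ) + 1) ^ d := by
  classical
  have := hindep.isProbabilityMeasure
  set F : Fin n → Set Ω := fun i => {ω | ∀ j ∈ s, ¬ X j ω ≤ X i ω}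
  have hF (i : Fin n) : MeasurableSet (F i) := by
    simp only [F, ofPred_forall]
    exact .iInter fun j => .iInter fun _ => (measurableSet_le (hmeas j) (hmeas i)).compl
  have hpt (ω : Ω) : (n : ℝ) - dnCount (fun i => X i ω) s = ∑ i, (F i).indicator 1 ω := by
    rw [natCast_sub_dnCount, Finset.card_filter]
    push_cast
    simp only [indicator_apply, Pi.one_apply]
    rfl
  have hFs (i : Fin n) (hi : i ∈ s) : F i = ∅ :=
    eq_empty_of_forall_notMem fun ω hω => hω i hi le_rfl
  simp_rw [hpt]
  rw [integral_finsetSum _ fun i _ => (integrable_const 1).indicator (hF i)]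
  simp_rw [integral_indicator_one (hF _)]
  rw [← Finset.sum_compl_add_sum s,
    Finset.sum_eq_zero (s := s) fun i hi => by rw [hFs i hi, measureReal_empty], add_zero,
    Finset.sum_congr rfl fun i hi =>
      measureReal_forall_not_le_of_iIndepFun hmeas hindep hlaw (Finset.mem_compl.1 hi),
    Finset.sum_const, Finset.card_compl, nsmul_eq_mul, Fintype.card_fin,
    Nat.cast_sub (s.card_le_univ.trans_eq (Fintype.card_fin n)), Fintype.card_fin]

end SkylineError

/-- Under component independence (modelled by i.i.d. uniform points on `[0,1]^d`),
the expected error of the sampling-based skyline algorithm with sample size `m`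
equals `((n-m)/(n(m+1))) H_{d-1,m+1}`, which is at most
`((n-m)/(n(m+1))) Σ_{i=0}^{d-1} (log(m+1))^i / i!`. -/
theorem expected_error_CI
    {Ω : Type*} [MeasureSpace Ω] [IsProbabilityMeasure (ℙ : Measure Ω)]
    {d n m : ℕ} (hd : 1 ≤ d) (hmn : m ≤ n) (X : Fin n → Ω → (Fin d → ℝ))
    (hmeas : ∀ i, Measurable (X i))
    (hindep : iIndepFun X ℙ)
    (hlaw : ∀ i, Measure.map (X i) ℙ = volume.restrict (Set.Icc (0 : Fin d → ℝ) 1)) :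
    ((Finset.powersetCard m (Finset.univ : Finset (Fin n))).card : ℝ)⁻¹ *
        ∑ s ∈ Finset.powersetCard m (Finset.univ : Finset (Fin n)),
          ∫ ω, ((n : ℝ) - (dnCount (fun i => X i ω) s : ℝ)) / n ∂ℙ =
      (((n : ℝ) - m) / (n * (m + 1))) * H (d - 1) (m + 1) ∧
    (((n : ℝ) - m) / (n * (m + 1))) * H (d - 1) (m + 1) ≤
      (((n : ℝ) - m) / (n * (m + 1))) *
        ∑ i ∈ Finset.range d, (Real.log (m + 1)) ^ i / (Nat.factorial i) := by
  obtain ⟨e, rfl⟩ : ∃ e, d = e + 1 := ⟨d - 1, by omega⟩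
  rw [Nat.add_sub_cancel]
  have hcard : ((Finset.powersetCard m (Finset.univ : Finset (Fin n))).card : ℝ) ≠ 0 := by
    rw [Finset.card_powersetCard, Finset.card_univ, Fintype.card_fin]
    exact_mod_cast (Nat.choose_pos hmn).ne'
  have herror (s) (hs : s ∈ Finset.powersetCard m (Finset.univ : Finset (Fin n))) :
      ∫ ω, ((n : ℝ) - (dnCount (fun i => X i ω) s : ℝ)) / n ∂ℙ =
        (((n : ℝ) - m) / (n * (m + 1))) * H e (m + 1) := by
    rw [integral_div, integral_natCast_sub_dnCount hmeas hindep hlaw,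
      (Finset.mem_powersetCard.1 hs).2, sum_range_choose_div_pow_succ_eq_H]
    simp only [div_eq_mul_inv, mul_inv]
    ring
  refine ⟨?_, mul_le_mul_of_nonneg_left (by exact_mod_cast H_le_logPowSum e (m + 1)) ?_⟩
  · rw [Finset.sum_congr rfl herror, Finset.sum_const, nsmul_eq_mul, ← mul_assoc,
      inv_mul_cancel₀ hcard, one_mul]
  · have : (m : ℝ) ≤ n := by exact_mod_cast hmn
    exact div_nonneg (sub_nonneg.2 this) (by positivity)
end

section
/- In the verification step of the DOUBLE algorithm: if the true error ε_j of the current approximate skyline exceeds ε, and the verification sample size s_v satisfies s_v ≥ 18(ln log₂ n + ln(1/δ))/ε, then the probability that the empirical error estimate ε̂_j (fraction of s_v i.i.d. verification tuples not dominated by the approximate skyline) is at most (2/3)ε is less than δ/log₂ n. -/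
/-!
The verification count `∑ Xᵢ` is a sum of `s_v` independent Bernoulli(`εⱼ`) indicators, and
`ε̂ⱼ ≤ (2/3)ε` forces it a third below its mean `s_v εⱼ`. The multiplicative Chernoff bound
`P(∑ Xᵢ ≤ (1 - d) s_v εⱼ) ≤ exp(-d² s_v εⱼ / 2)`, obtained from the exponential moment at `-d`
and `e^{-d} ≤ 1 - d + d²/2`, gives `exp(-s_v εⱼ / 18) < exp(-s_v ε / 18) ≤ δ / log₂ n` for `d = 1/3`.
-/

open MeasureTheory ProbabilityTheory Real

theorem Real.exp_neg_le_one_sub_add_sq_div_two {x : ℝ} (hx : 0 ≤ x) :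
    exp (-x) ≤ 1 - x + x ^ 2 / 2 := by
  have hcubic : 1 + x + x ^ 2 / 2 + x ^ 3 / 6 ≤ exp x := by
    have := sum_le_exp_of_nonneg hx 4
    norm_num [Finset.sum_range_succ, Nat.factorial] at this
    linarith
  -- `(1 - x + x²/2) (1 + x + x²/2 + x³/6) = 1 + x³/6 + x⁴/12 + x⁵/12`
  have hprod : 1 ≤ (1 - x + x ^ 2 / 2) * (1 + x + x ^ 2 / 2 + x ^ 3 / 6) := by
    nlinarith [pow_nonneg hx 3, pow_nonneg hx 4, pow_nonneg hx 5]
  rw [exp_neg, inv_le_iff_one_le_mul₀ (exp_pos x)]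
  calc 1 ≤ (1 - x + x ^ 2 / 2) * (1 + x + x ^ 2 / 2 + x ^ 3 / 6) := hprod
    _ ≤ _ := by gcongr; nlinarith [sq_nonneg (x - 1)]

namespace ProbabilityTheory

variable {Ω : Type*} {m : MeasurableSpace Ω} {μ : Measure Ω}

lemma exp_mul_eq_one_add_indicator {X : Ω → ℝ} (h01 : ∀ ω, X ω = 0 ∨ X ω = 1) (t : ℝ) :
    (fun ω ↦ exp (t * X ω)) = fun ω ↦ 1 + {ω | X ω = 1}.indicator (fun _ ↦ exp t - 1) ω := by
  funext ω
  rcases h01 ω with h | h <;> simp [h]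

variable [IsProbabilityMeasure μ]

lemma integrable_exp_mul_of_eq_zero_or_eq_one {X : Ω → ℝ} (hX : Measurable X)
    (h01 : ∀ ω, X ω = 0 ∨ X ω = 1) (t : ℝ) : Integrable (fun ω ↦ exp (t * X ω)) μ := by
  rw [exp_mul_eq_one_add_indicator h01]
  exact (integrable_const 1).add
    ((integrable_const _).indicator (hX (measurableSet_singleton 1)))

lemma mgf_of_eq_zero_or_eq_one {X : Ω → ℝ} (hX : Measurable X)
    (h01 : ∀ ω, X ω = 0 ∨ X ω = 1) (t : ℝ) :
    mgf X μ t = 1 + (exp t - 1) * μ.real {ω | X ω = 1} := by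
  have hs : MeasurableSet {ω | X ω = 1} := hX (measurableSet_singleton 1)
  rw [mgf, exp_mul_eq_one_add_indicator h01,
    integral_add (integrable_const 1) ((integrable_const _).indicator hs), integral_const,
    integral_indicator_const _ hs]
  simp [mul_comm]

lemma mgf_sum_le_of_eq_zero_or_eq_one {ι : Type*} [Fintype ι] {X : ι → Ω → ℝ} {p : ℝ}
    (hmeas : ∀ i, Measurable (X i)) (hindep : iIndepFun X μ)
    (h01 : ∀ i ω, X i ω = 0 ∨ X i ω = 1) (hp : ∀ i, μ.real {ω | X i ω = 1} = p) (t : ℝ) :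
    mgf (∑ i, X i) μ t ≤ exp ((exp t - 1) * (Fintype.card ι * p)) := by
  have hmgf_le : ∀ i, mgf (X i) μ t ≤ exp ((exp t - 1) * p) := fun i ↦ by
    rw [mgf_of_eq_zero_or_eq_one (hmeas i) (h01 i), hp, add_comm]
    exact add_one_le_exp _
  calc mgf (∑ i, X i) μ t = ∏ i, mgf (X i) μ t := hindep.mgf_sum hmeas _
    _ ≤ ∏ _i : ι, exp ((exp t - 1) * p) :=
        Finset.prod_le_prod (fun _ _ ↦ mgf_nonneg) fun i _ ↦ hmgf_le i
    _ = _ := by rw [Finset.prod_const, Finset.card_univ, ← exp_nat_mul]; ring_nf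

theorem measureReal_sum_le_one_sub_mul_le {ι : Type*} [Fintype ι] {X : ι → Ω → ℝ} {p d : ℝ}
    (hmeas : ∀ i, Measurable (X i)) (hindep : iIndepFun X μ)
    (h01 : ∀ i ω, X i ω = 0 ∨ X i ω = 1) (hp : ∀ i, μ.real {ω | X i ω = 1} = p) (hd : 0 ≤ d) :
    μ.real {ω | ∑ i, X i ω ≤ (1 - d) * (Fintype.card ι * p)} ≤
      exp (-(d ^ 2 * (Fintype.card ι * p) / 2)) := by
  set mean := (Fintype.card ι : ℝ) * p
  have hmean_nonneg : 0 ≤ mean := by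
    rcases isEmpty_or_nonempty ι with hι | ⟨⟨i⟩⟩
    · simp [mean]
    · exact mul_nonneg (Nat.cast_nonneg _) (hp i ▸ measureReal_nonneg)
  have h_int : Integrable (fun ω ↦ exp (-d * (∑ i, X i) ω)) μ :=
    hindep.integrable_exp_mul_sum hmeas fun i _ ↦
      integrable_exp_mul_of_eq_zero_or_eq_one (hmeas i) (h01 i) _
  have hchernoff := measure_le_le_exp_mul_mgf ((1 - d) * mean) (neg_nonpos.mpr hd) h_int
  simp only [Finset.sum_apply] at hchernoff
  calc _ ≤ exp (-(-d) * ((1 - d) * mean)) * mgf (∑ i, X i) μ (-d) := hchernoff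
    _ ≤ exp (d * ((1 - d) * mean)) * exp ((exp (-d) - 1) * mean) := by
        rw [neg_neg]
        gcongr
        exact mgf_sum_le_of_eq_zero_or_eq_one hmeas hindep h01 hp _
    _ ≤ _ := by
        rw [← exp_add]
        gcongr
        nlinarith [exp_neg_le_one_sub_add_sq_div_two hd]

end ProbabilityTheory

/-- Verification step of DOUBLE: if the true error `εⱼ` of the current approximate
skyline exceeds the bound `ε`, and the verification sample size satisfies
`s_v ≥ 18(ln log₂ n + ln(1/δ))/ε`, then the probability that the empirical error
estimate (fraction of the `s_v` i.i.d. Bernoulli(εⱼ) verification indicators equal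
to 1) is at most `(2/3)ε` is less than `δ/log₂ n`. -/
theorem double_verification_error
    {Ω : Type*} [MeasureSpace Ω] [IsProbabilityMeasure (ℙ : Measure Ω)]
    {sv n : ℕ} {ε εj δ : ℝ} (hn : 2 ≤ n) (hδ0 : 0 < δ) (hδ1 : δ < 1)
    (hε0 : 0 < ε) (hεj : ε < εj)
    (hsv : 18 * (Real.log (Real.logb 2 n) + Real.log (1 / δ)) / ε ≤ (sv : ℝ))
    (X : Fin sv → Ω → ℝ)
    (hmeas : ∀ i, Measurable (X i))
    (hindep : iIndepFun X ℙ)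
    (h01 : ∀ i ω, X i ω = 0 ∨ X i ω = 1)
    (hmean : ∀ i, (ℙ {ω | X i ω = 1}).toReal = εj) :
    (ℙ {ω | (1 / (sv : ℝ)) * ∑ i, X i ω ≤ (2 / 3) * ε}).toReal <
      δ / Real.logb 2 n := by
  have hlogb : 1 ≤ logb 2 n := by
    rw [le_logb_iff_rpow_le one_lt_two (by positivity)]
    exact_mod_cast hn
  have hlogb_pos : 0 < logb 2 n := one_pos.trans_le hlogb
  have hlog_inv_δ : 0 < log (1 / δ) := log_pos (one_lt_one_div hδ0 hδ1)
  have hsv_pos : 0 < (sv : ℝ) :=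
    lt_of_lt_of_le (by have := log_nonneg hlogb; positivity) hsv
  have hsv' : 18 * (log (logb 2 n) + log (1 / δ)) ≤ sv * ε := by rwa [div_le_iff₀ hε0] at hsv
  have hevent : {ω | 1 / (sv : ℝ) * ∑ i, X i ω ≤ 2 / 3 * ε} ⊆
      {ω | ∑ i, X i ω ≤ (1 - 1 / 3) * (Fintype.card (Fin sv) * εj)} := by
    intro ω hω
    simp only [Set.mem_ofPred_eq, Fintype.card_fin, one_div, inv_mul_le_iff₀ hsv_pos] at hω ⊢
    nlinarith
  calc _ ≤ (ℙ : Measure Ω).real {ω | ∑ i, X i ω ≤ (1 - 1 / 3) * (Fintype.card (Fin sv) * εj)} :=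
        measureReal_mono hevent
    _ ≤ exp (-((1 / 3) ^ 2 * (Fintype.card (Fin sv) * εj) / 2)) :=
        measureReal_sum_le_one_sub_mul_le hmeas hindep h01 hmean (by norm_num)
    _ < exp (-(log (logb 2 n) + log (1 / δ))) := by
        rw [Fintype.card_fin]
        gcongr
        nlinarith
    _ = δ / logb 2 n := by
        rw [exp_neg, exp_add, exp_log hlogb_pos, exp_log (by positivity)]
        field_simp
end
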